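/- Let P be an antichain of consecutive patterns containing exactly one pattern of each length l ≥ 4 and no patterns of any other length, and let α > 0 satisfy e^α − 2α − α²/2 − α³/6 = 0. Then for every n ≥ 0 the number of permutations of length n avoiding all patterns in P satisfies a^P_n ≥ α^{−n} · n!; in particular, for every n there exists at least one permutation of length n avoiding P, regardless of the actual choice of the patterns in P. -/

import Mathlib

/-- Standardization of a list of (distinct) natural numbers: entry `x` is replaced
by the number of entries of the list that are smaller than `x`.  For a list with
distinct entries this is the unique order-isomorphic permutation of `{0,…,n-1}`. -/
def std (l : List ℕ) : List ℕ := l.map (fun x => (l.filter (· < x)).length)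

/-- `l` is (the list of values of) a permutation of `{0,…,n-1}` where `n = l.length`. -/
def IsPermList (l : List ℕ) : Prop := l.Perm (List.range l.length)

/-- The pattern `τ` occurs in `σ` as a consecutive pattern at (0-indexed) position `i`:
the factor of `σ` of length `τ.length` starting at position `i` is order-isomorphic to `τ`. -/
def OccursAt (τ σ : List ℕ) (i : ℕ) : Prop :=
  i + τ.length ≤ σ.length ∧ std ((σ.drop i).take τ.length) = τ

/-- `τ` occurs somewhere in `σ` as a consecutive pattern. -/
def Occurs (τ σ : List ℕ) : Prop := ∃ i, OccursAt τ σ i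

/-- `σ` avoids every pattern of the set `P`. -/
def AvoidsAll (P : Set (List ℕ)) (σ : List ℕ) : Prop := ∀ τ ∈ P, ¬ Occurs τ σ

/-- The number of permutations of length `n` avoiding all the patterns of `P`
as consecutive patterns. -/
noncomputable def avoidCount (P : Set (List ℕ)) (n : ℕ) : ℕ :=
  Nat.card {σ : List ℕ // σ.length = n ∧ IsPermList σ ∧ AvoidsAll P σ}

/-- `P` is an antichain of consecutive patterns: every element is a permutation of
length at least 2, and no pattern of `P` occurs in a different pattern of `P`. -/
def PatternAntichain (P : Set (List ℕ)) : Prop :=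
  (∀ τ ∈ P, IsPermList τ ∧ 2 ≤ τ.length) ∧
    ∀ τ₁ ∈ P, ∀ τ₂ ∈ P, τ₁ ≠ τ₂ → ¬ Occurs τ₁ τ₂

/-- `IsChainT P q σ t`: the permutation (list) `σ` is a `q`-chain with respect to the
set of forbidden patterns `P`, with tail the terminal segment of `σ` of length `t`.
The empty permutation is the unique 0-chain (its own tail), the one-element
permutation is the unique 1-chain (its own tail), and a `(q+1)`-chain is a
concatenation `σ' ++ τ` (with `τ` nonempty) such that the standardization of `σ'` is a
`q`-chain with tail `τ'` (its last `t'` entries), and the standardization of `τ' ++ τ`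
contains exactly one occurrence of a pattern from `P`, this occurrence being a
terminal segment; the tail of the `(q+1)`-chain is `τ`. -/
inductive IsChainT (P : Set (List ℕ)) : ℕ → List ℕ → ℕ → Prop
  | zero : IsChainT P 0 [] 0
  | one : IsChainT P 1 [0] 1
  | succ (q : ℕ) (σ' τ : List ℕ) (t' : ℕ)
      (hτ : τ ≠ [])
      (hperm : IsPermList (σ' ++ τ))
      (hchain : IsChainT P q (std σ') t')
      (huniq : ∃! x : ℕ × List ℕ,
        x.2 ∈ P ∧ OccursAt x.2 (std (σ'.drop (σ'.length - t') ++ τ)) x.1)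
      (hterm : ∀ i : ℕ, ∀ ρ ∈ P,
        OccursAt ρ (std (σ'.drop (σ'.length - t') ++ τ)) i → i + ρ.length = t' + τ.length) :
      IsChainT P (q + 1) (σ' ++ τ) τ.length

/-- `σ` is a `q`-chain with respect to `P` (for some tail). -/
def IsPatChain (P : Set (List ℕ)) (q : ℕ) (σ : List ℕ) : Prop := ∃ t, IsChainT P q σ t

/-- `chainCount P n q` is the number of `q`-chains of length `n` with respect to `P`. -/
noncomputable def chainCount (P : Set (List ℕ)) (n q : ℕ) : ℕ :=
  Nat.card {σ : List ℕ // σ.length = n ∧ IsPatChain P q σ}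

/-- The number of `q`-chains of length `n` whose first entry is `p`
(entries counted `1,…,n`, while lists are `0`-indexed permutations of `{0,…,n-1}`). -/
noncomputable def chainCountFst (P : Set (List ℕ)) (n q p : ℕ) : ℕ :=
  Nat.card {σ : List ℕ // σ.length = n ∧ IsPatChain P q σ ∧ σ.getD 0 0 + 1 = p}

/-- The number of `q`-chains of length `n` whose first entry is `p` and second entry is `r`
(entries counted `1,…,n`). -/
noncomputable def chainCountFstSnd (P : Set (List ℕ)) (n q p r : ℕ) : ℕ :=
  Nat.card {σ : List ℕ //
    σ.length = n ∧ IsPatChain P q σ ∧ σ.getD 0 0 + 1 = p ∧ σ.getD 1 0 + 1 = r}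

/-- A pattern `τ` has no self-overlaps if every permutation of length at most
`2 * τ.length - 2` contains at most one occurrence of `τ`. -/
def NonSelfOverlapping (τ : List ℕ) : Prop :=
  ∀ σ : List ℕ, IsPermList σ → σ.length ≤ 2 * τ.length - 2 →
    ∀ i j : ℕ, OccursAt τ σ i → OccursAt τ σ j → i = j

/-- The number of occurrences of `τ` in `σ` as a consecutive pattern. -/
noncomputable def occCount (τ σ : List ℕ) : ℕ := Nat.card {i : ℕ // OccursAt τ σ i}

/-- The `k`-fold ordered sum `λ (λ+m) (λ+2m) … (λ+(k-1)m)` of a pattern `λ` of length `m`. -/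
def ordSum (k m : ℕ) (l : List ℕ) : List ℕ :=
  ((List.range k).map (fun j => l.map (fun x => x + j * m))).flatten

/-- The length of the maximal initial segment of `l` that is an increasing run. -/
noncomputable def initRise (l : List ℕ) : ℕ :=
  sSup {j | j ≤ l.length ∧ List.Pairwise (· < ·) (l.take j)}

/-- The length of the maximal terminal segment of `l` that is an increasing run. -/
noncomputable def termRise (l : List ℕ) : ℕ :=
  sSup {j | j ≤ l.length ∧ List.Pairwise (· < ·) (l.drop (l.length - j))}

/-!
Write `a n` for the number of permutations of length `n` avoiding `P`. Appending a last value
`r ≤ n` to an avoider of length `n` (shifting the values `≥ r` up by one) yields `(n + 1) * a n`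
permutations whose first `n` entries avoid `P`. Each of them avoids `P`, or else some pattern of
`P` of length `l ≥ 4` occurs as its terminal factor; as `P` has a single pattern of length `l`,
such a permutation is determined by the set of its last `l` values and the standardization of its
first `n + 1 - l` entries, an avoider. Hence
`(n + 1) a n ≤ a (n + 1) + ∑_{l ≥ 4} C(n + 1, l) a (n + 1 - l)`.
For `b n = α ^ n a n / n!` this reads `α b n ≤ b (n + 1) + ∑_{l ≥ 4} α ^ l / l! · b (n + 1 - l)`,
and `∑_{l ≥ 4} α ^ l / l! = e ^ α - 1 - α - α² / 2 - α³ / 6 = α - 1`, so by induction `b` is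
nondecreasing and `b n ≥ b 0 = 1`.
-/

lemma length_filter_lt_strictMonoOn (u : List ℕ) :
    StrictMonoOn (fun x => (u.filter (· < x)).length) {x | x ∈ u} := by
  intro x hx y _ hxy
  have hsub : u.filter (· < x) = (u.filter (· < y)).filter (· < x) := by
    rw [List.filter_filter]
    refine List.filter_congr fun a _ => ?_
    by_cases h : a < x
    · simp [h, h.trans hxy]
    · simp [h]
  simp only [hsub, List.length_filter_lt_length_iff_exists]
  exact ⟨x, List.mem_filter.2 ⟨hx, by simpa using hxy⟩, by simp⟩

lemma std_length (l : List ℕ) : (std l).length = l.length := List.length_map _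

lemma std_map_of_strictMonoOn {f : ℕ → ℕ} {l : List ℕ} (hf : StrictMonoOn f {x | x ∈ l}) :
    std (l.map f) = std l := by
  simp only [std, List.map_map]
  refine List.map_congr_left fun x hx => ?_
  simp only [Function.comp_apply, ← List.countP_eq_length_filter, List.countP_map]
  exact List.countP_congr fun a ha => by simpa using hf.lt_iff_lt ha hx

lemma std_drop_take_std (u : List ℕ) (i L : ℕ) :
    std (((std u).drop i).take L) = std ((u.drop i).take L) := by
  rw [show std u = u.map (fun x => (u.filter (· < x)).length) from rfl, ← List.map_drop,
    ← List.map_take]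
  exact std_map_of_strictMonoOn ((length_filter_lt_strictMonoOn u).mono
    fun x hx => List.mem_of_mem_drop (List.mem_of_mem_take hx))

lemma IsPermList.nodup {l : List ℕ} (h : IsPermList l) : l.Nodup :=
  h.nodup_iff.2 List.nodup_range

lemma IsPermList.lt_length {l : List ℕ} (h : IsPermList l) {x : ℕ} (hx : x ∈ l) :
    x < l.length :=
  List.mem_range.1 (h.mem_iff.1 hx)

lemma isPermList_of_nodup_of_lt {l : List ℕ} (hn : l.Nodup) (hlt : ∀ x ∈ l, x < l.length) :
    IsPermList l :=
  (hn.subperm fun x hx => List.mem_range.2 (hlt x hx)).perm_of_length_le (by simp)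

lemma IsPermList.perm {l₁ l₂ : List ℕ} (h₁ : IsPermList l₁) (h₂ : IsPermList l₂)
    (hlen : l₁.length = l₂.length) : l₁.Perm l₂ :=
  h₁.trans (hlen ▸ h₂.symm)

lemma length_filter_range_lt (x n : ℕ) : ((List.range n).filter (· < x)).length = min x n := by
  induction n with
  | zero => simp
  | succ n ih =>
    rw [List.range_succ, List.filter_append, List.length_append, ih]
    by_cases h : n < x <;> simp [h] <;> omega

lemma IsPermList.std_eq {l : List ℕ} (h : IsPermList l) : std l = l := by
  refine (List.map_congr_left fun x hx => ?_).trans (List.map_id l)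
  rw [← List.countP_eq_length_filter, h.countP_eq, List.countP_eq_length_filter,
    length_filter_range_lt, min_eq_left (h.lt_length hx).le, id]

lemma isPermList_std {l : List ℕ} (hn : l.Nodup) : IsPermList (std l) := by
  refine isPermList_of_nodup_of_lt
    (hn.map_on fun x hx y hy => (length_filter_lt_strictMonoOn l).injOn hx hy) ?_
  simp only [std, List.mem_map, List.length_map, forall_exists_index, and_imp]
  rintro _ x hx rfl
  exact List.length_filter_lt_length_iff_exists.2 ⟨x, hx, by simp⟩

lemma eq_of_perm_of_std_eq {l₁ l₂ : List ℕ} (hp : l₁.Perm l₂) (hstd : std l₁ = std l₂) :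
    l₁ = l₂ := by
  refine List.ext_getElem hp.length_eq fun i h₁ h₂ => ?_
  have hrank := congrArg (·[i]?) hstd
  simp only [std, List.getElem?_map, List.getElem?_eq_getElem h₁,
    List.getElem?_eq_getElem h₂, Option.map_some, Option.some.injEq] at hrank
  rw [← List.countP_eq_length_filter, ← List.countP_eq_length_filter, hp.countP_eq,
    List.countP_eq_length_filter, List.countP_eq_length_filter] at hrank
  exact (length_filter_lt_strictMonoOn l₂).injOn (hp.mem_iff.1 (l₁.getElem_mem h₁))
    (l₂.getElem_mem h₂) hrank

lemma OccursAt.std_take {τ σ : List ℕ} {i m : ℕ} (h : OccursAt τ σ i)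
    (hm : i + τ.length ≤ m) : OccursAt τ (std (σ.take m)) i := by
  refine ⟨by simp [std_length, h.1, hm], ?_⟩
  rw [std_drop_take_std, List.drop_take, List.take_take, min_eq_left (by omega)]
  exact h.2

lemma OccursAt.of_std_take {τ σ : List ℕ} {i m : ℕ} (h : OccursAt τ (std (σ.take m)) i) :
    OccursAt τ σ i := by
  obtain ⟨hlen, hstd⟩ := h
  rw [std_length, List.length_take] at hlen
  rw [std_drop_take_std, List.drop_take, List.take_take, min_eq_left (by omega)] at hstd
  exact ⟨by omega, hstd⟩

lemma AvoidsAll.std_take_of_le {P : Set (List ℕ)} {σ : List ℕ} {m m' : ℕ}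
    (h : AvoidsAll P (std (σ.take m))) (hm : m' ≤ m) : AvoidsAll P (std (σ.take m')) := by
  rintro τ hτ ⟨i, hi⟩
  have hlen := hi.1
  rw [std_length, List.length_take] at hlen
  exact h τ hτ ⟨i, hi.of_std_take.std_take (by omega)⟩

lemma IsPermList.eq_of_std_take_eq_of_drop {σ σ' : List ℕ} (hσ : IsPermList σ)
    (hσ' : IsPermList σ') (hlen : σ.length = σ'.length) {m : ℕ}
    (htake : std (σ.take m) = std (σ'.take m))
    (hset : (σ.drop m).toFinset = (σ'.drop m).toFinset)
    (hdrop : std (σ.drop m) = std (σ'.drop m)) : σ = σ' := by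
  have hnd : ∀ {l : List ℕ}, IsPermList l → (l.drop m).Nodup := fun h =>
    h.nodup.sublist (List.drop_sublist _ _)
  have hdrop_eq : σ.drop m = σ'.drop m := eq_of_perm_of_std_eq
    (List.perm_of_nodup_nodup_toFinset_eq (hnd hσ) (hnd hσ') hset) hdrop
  have htake_perm : (σ.take m).Perm (σ'.take m) := by
    have hp := hσ.perm hσ' hlen
    rw [← List.take_append_drop m σ, ← List.take_append_drop m σ', hdrop_eq] at hp
    exact List.perm_append_right_iff _ |>.1 hp
  rw [← List.take_append_drop m σ, ← List.take_append_drop m σ', hdrop_eq,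
    eq_of_perm_of_std_eq htake_perm htake]

def permsOfLength (n : ℕ) : Finset (List ℕ) := (List.range n).permutations.toFinset

lemma mem_permsOfLength {n : ℕ} {σ : List ℕ} :
    σ ∈ permsOfLength n ↔ σ.length = n ∧ IsPermList σ := by
  simp only [permsOfLength, List.mem_toFinset, List.mem_permutations, IsPermList]
  constructor
  · intro h
    have hlen : σ.length = n := by simpa using h.length_eq
    exact ⟨hlen, hlen ▸ h⟩
  · rintro ⟨rfl, h⟩
    exact h

open Classical in
noncomputable def avoiders (P : Set (List ℕ)) (n : ℕ) : Finset (List ℕ) :=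
  (permsOfLength n).filter (AvoidsAll P)

lemma mem_avoiders {P : Set (List ℕ)} {n : ℕ} {σ : List ℕ} :
    σ ∈ avoiders P n ↔ σ.length = n ∧ IsPermList σ ∧ AvoidsAll P σ := by
  simp only [avoiders, Finset.mem_filter, mem_permsOfLength, and_assoc]

lemma avoidCount_eq_card (P : Set (List ℕ)) (n : ℕ) : avoidCount P n = (avoiders P n).card := by
  rw [← Nat.card_eq_finsetCard, avoidCount]
  exact Nat.card_congr (Equiv.subtypeEquivRight fun σ => mem_avoiders.symm)

lemma avoidCount_zero {P : Set (List ℕ)} (hP : [] ∉ P) : avoidCount P 0 = 1 := by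
  rw [avoidCount_eq_card, Finset.card_eq_one]
  refine ⟨[], Finset.eq_singleton_iff_unique_mem.2 ⟨mem_avoiders.2 ⟨rfl, List.Perm.refl _, ?_⟩,
    fun σ hσ => List.length_eq_zero_iff.1 (mem_avoiders.1 hσ).1⟩⟩
  rintro τ hτ ⟨i, hlen, -⟩
  rw [List.length_nil] at hlen
  obtain rfl : τ = [] := List.length_eq_zero_iff.1 (by omega)
  exact hP hτ

def succAboveNat (r v : ℕ) : ℕ := if v < r then v else v + 1

lemma strictMono_succAboveNat (r : ℕ) : StrictMono (succAboveNat r) := by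
  intro x y hxy
  unfold succAboveNat
  split_ifs <;> omega

lemma isPermList_map_succAboveNat_append {π : List ℕ} (hπ : IsPermList π) {r : ℕ}
    (hr : r ≤ π.length) : IsPermList (π.map (succAboveNat r) ++ [r]) := by
  refine isPermList_of_nodup_of_lt (List.nodup_append.2
    ⟨hπ.nodup.map (strictMono_succAboveNat r).injective, List.nodup_singleton r, ?_⟩) ?_
  · simp only [List.mem_map, List.mem_singleton, succAboveNat]
    rintro _ ⟨v, -, rfl⟩ _ rfl
    split_ifs <;> omega
  · simp only [List.mem_append, List.mem_map, List.mem_singleton, List.length_append,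
      List.length_map, List.length_singleton]
    rintro _ (⟨v, hv, rfl⟩ | rfl)
    · have := hπ.lt_length hv
      unfold succAboveNat
      split_ifs <;> omega
    · omega

section Counting

variable {P : Set (List ℕ)}

open Classical in
noncomputable def prefixAvoiders (P : Set (List ℕ)) (n : ℕ) : Finset (List ℕ) :=
  (permsOfLength (n + 1)).filter fun σ => AvoidsAll P (std (σ.take n))

open Classical in
noncomputable def terminalOccurrences (P : Set (List ℕ)) (N l : ℕ) : Finset (List ℕ) :=
  (permsOfLength N).filter fun σ =>
    AvoidsAll P (std (σ.take (N - l))) ∧ std (σ.drop (N - l)) ∈ P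

lemma succ_mul_card_avoiders_le (n : ℕ) :
    (n + 1) * (avoiders P n).card ≤ (prefixAvoiders P n).card := by
  rw [← Finset.card_range (n + 1), ← Finset.card_product]
  refine Finset.card_le_card_of_injOn (fun x => x.2.map (succAboveNat x.1) ++ [x.1]) ?_ ?_
  · rintro ⟨r, π⟩ h
    simp only [Finset.coe_product, Set.mem_prod, Finset.mem_coe, Finset.mem_range,
      mem_avoiders] at h
    obtain ⟨hr, hlen, hπ, hav⟩ := h
    simp only [prefixAvoiders, Finset.mem_coe, Finset.mem_filter, mem_permsOfLength]
    refine ⟨⟨by simp [hlen], isPermList_map_succAboveNat_append hπ (by omega)⟩, ?_⟩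
    rwa [List.take_left' (by simp [hlen]),
      std_map_of_strictMonoOn ((strictMono_succAboveNat r).strictMonoOn _), hπ.std_eq]
  · rintro ⟨r, π⟩ h ⟨r', π'⟩ h' he
    dsimp only at he
    simp only [Finset.coe_product, Set.mem_prod, Finset.mem_coe, mem_avoiders] at h h'
    obtain ⟨hmap, hr⟩ := List.append_inj he (by simp [h.2.1, h'.2.1])
    obtain rfl : r = r' := by simpa using hr
    rw [List.map_injective_iff.2 (strictMono_succAboveNat r).injective hmap]

lemma prefixAvoiders_subset {k : ℕ} (hk : 0 < k) (hlen : ∀ τ ∈ P, k ≤ τ.length) (n : ℕ) :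
    prefixAvoiders P n ⊆
      avoiders P (n + 1) ∪ (Finset.Icc k (n + 1)).biUnion (terminalOccurrences P (n + 1)) := by
  intro σ hσ
  simp only [prefixAvoiders, Finset.mem_filter, mem_permsOfLength] at hσ
  obtain ⟨⟨hσlen, hσ⟩, hav⟩ := hσ
  by_cases hA : AvoidsAll P σ
  · exact Finset.mem_union_left _ (mem_avoiders.2 ⟨hσlen, hσ, hA⟩)
  simp only [AvoidsAll, not_forall, not_not] at hA
  obtain ⟨τ, hτ, i, hi⟩ := hA
  have hend : i + τ.length = n + 1 := by
    have := hi.1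
    by_contra hne
    exact hav τ hτ ⟨i, hi.std_take (by omega)⟩
  refine Finset.mem_union_right _ (Finset.mem_biUnion.2 ⟨τ.length,
    Finset.mem_Icc.2 ⟨hlen τ hτ, by omega⟩, ?_⟩)
  have := hlen τ hτ
  simp only [terminalOccurrences, Finset.mem_filter, mem_permsOfLength]
  refine ⟨⟨hσlen, hσ⟩, hav.std_take_of_le (by omega), ?_⟩
  have hstd := hi.2
  rw [List.take_of_length_le (by simp; omega), show i = n + 1 - τ.length by omega] at hstd
  rwa [hstd]

lemma card_terminalOccurrences_le (hinj : Set.InjOn List.length P) {N l : ℕ} (hl : l ≤ N) :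
    (terminalOccurrences P N l).card ≤ N.choose l * (avoiders P (N - l)).card := by
  have hdrop_len : ∀ {σ : List ℕ}, σ.length = N → (σ.drop (N - l)).length = l := fun h => by
    simp [h]; omega
  calc (terminalOccurrences P N l).card
      ≤ ((Finset.range N).powersetCard l ×ˢ avoiders P (N - l)).card :=
        Finset.card_le_card_of_injOn
          (fun σ => ((σ.drop (N - l)).toFinset, std (σ.take (N - l)))) ?_ ?_
    _ = N.choose l * (avoiders P (N - l)).card := by
      rw [Finset.card_product, Finset.card_powersetCard, Finset.card_range]
  · intro σ h
    simp only [terminalOccurrences, Finset.mem_coe, Finset.mem_filter, mem_permsOfLength] at h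
    obtain ⟨⟨hσlen, hσ⟩, hav, -⟩ := h
    simp only [Finset.coe_product, Set.mem_prod, Finset.mem_coe, Finset.mem_powersetCard,
      mem_avoiders]
    refine ⟨⟨fun x hx => ?_, ?_⟩, by simp [std_length, hσlen],
      isPermList_std (hσ.nodup.sublist (List.take_sublist _ _)), hav⟩
    · rw [List.mem_toFinset] at hx
      exact Finset.mem_range.2 (hσlen ▸ hσ.lt_length (List.mem_of_mem_drop hx))
    · rw [List.toFinset_card_of_nodup (hσ.nodup.sublist (List.drop_sublist _ _)),
        hdrop_len hσlen]
  · intro σ h σ' h' he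
    simp only [terminalOccurrences, Finset.mem_coe, Finset.mem_filter, mem_permsOfLength] at h h'
    simp only [Prod.mk.injEq] at he
    refine h.1.2.eq_of_std_take_eq_of_drop h'.1.2 (h.1.1.trans h'.1.1.symm) he.2 he.1 ?_
    refine hinj h.2.2 h'.2.2 ?_
    rw [std_length, std_length, hdrop_len h.1.1, hdrop_len h'.1.1]

lemma succ_mul_avoidCount_le {k : ℕ} (hk : 0 < k) (hlen : ∀ τ ∈ P, k ≤ τ.length)
    (hinj : Set.InjOn List.length P) (n : ℕ) :
    (n + 1) * avoidCount P n ≤ avoidCount P (n + 1) +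
      ∑ l ∈ Finset.Icc k (n + 1), (n + 1).choose l * avoidCount P (n + 1 - l) := by
  simp only [avoidCount_eq_card]
  calc (n + 1) * (avoiders P n).card
      ≤ (prefixAvoiders P n).card := succ_mul_card_avoiders_le n
    _ ≤ (avoiders P (n + 1) ∪
          (Finset.Icc k (n + 1)).biUnion (terminalOccurrences P (n + 1))).card :=
      Finset.card_le_card (prefixAvoiders_subset hk hlen n)
    _ ≤ (avoiders P (n + 1)).card +
          ∑ l ∈ Finset.Icc k (n + 1), (terminalOccurrences P (n + 1) l).card :=
      (Finset.card_union_le _ _).trans (Nat.add_le_add_left Finset.card_biUnion_le _)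
    _ ≤ _ := Nat.add_le_add_left (Finset.sum_le_sum fun l hl =>
      card_terminalOccurrences_le hinj (Finset.mem_Icc.1 hl).2) _

end Counting

open Nat in
lemma pow_div_factorial_mul_choose (α : ℝ) {N l : ℕ} (hl : l ≤ N) :
    α ^ N / N ! * N.choose l = α ^ l / l ! * (α ^ (N - l) / (N - l)!) := by
  have h : ((N.choose l * l ! * (N - l)! : ℕ) : ℝ) = N ! := by
    rw [Nat.choose_mul_factorial_mul_factorial hl]
  push_cast at h
  have hchoose : (N.choose l : ℝ) ≠ 0 := by exact_mod_cast (Nat.choose_pos hl).ne'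
  rw [← h, ← pow_mul_pow_sub α hl]
  field_simp

lemma monotone_of_mul_le_add_sum {b c : ℕ → ℝ} {α : ℝ} {k : ℕ} (hk : 0 < k) (hb : 0 ≤ b)
    (hc : 0 ≤ c) (hsum : ∀ n, ∑ l ∈ Finset.Icc k (n + 1), c l ≤ α - 1)
    (hrec : ∀ n, α * b n ≤ b (n + 1) + ∑ l ∈ Finset.Icc k (n + 1), c l * b (n + 1 - l)) :
    Monotone b := by
  suffices h : ∀ n, ∀ j ≤ n, b j ≤ b n from fun i j hij => h j i hij
  intro n
  induction n with
  | zero => intro j hj; rw [Nat.le_zero.1 hj]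
  | succ n ih =>
    have hstep : b n ≤ b (n + 1) := by
      have hterms : ∑ l ∈ Finset.Icc k (n + 1), c l * b (n + 1 - l) ≤ (α - 1) * b n :=
        calc ∑ l ∈ Finset.Icc k (n + 1), c l * b (n + 1 - l)
            ≤ ∑ l ∈ Finset.Icc k (n + 1), c l * b n :=
              Finset.sum_le_sum fun l hl => mul_le_mul_of_nonneg_left
                (ih _ (by rw [Finset.mem_Icc] at hl; omega)) (hc l)
          _ = (∑ l ∈ Finset.Icc k (n + 1), c l) * b n := (Finset.sum_mul _ _ _).symm
          _ ≤ (α - 1) * b n := mul_le_mul_of_nonneg_right (hsum n) (hb n)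
      linarith [hrec n]
    intro j hj
    rcases hj.eq_or_lt with rfl | hj
    · exact le_rfl
    · exact (ih j (by omega)).trans hstep

open Nat in
lemma factorial_div_pow_mul_le {a : ℕ → ℝ} {α : ℝ} {k : ℕ} (hk : 0 < k) (ha : 0 ≤ a)
    (hα : 0 < α) (hsum : ∀ n, ∑ l ∈ Finset.Icc k (n + 1), α ^ l / l ! ≤ α - 1)
    (hrec : ∀ n, (n + 1) * a n ≤
      a (n + 1) + ∑ l ∈ Finset.Icc k (n + 1), (n + 1).choose l * a (n + 1 - l))
    (n : ℕ) : n ! / α ^ n * a 0 ≤ a n := by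
  have hb : Monotone fun n => α ^ n / (n ! : ℝ) * a n := by
    refine monotone_of_mul_le_add_sum hk (fun n => mul_nonneg (by positivity) (ha n))
      (fun l => show (0 : ℝ) ≤ α ^ l / (l ! : ℝ) by positivity) hsum fun n => ?_
    have hscaled := mul_le_mul_of_nonneg_left (hrec n)
      (by positivity : (0 : ℝ) ≤ α ^ (n + 1) / (n + 1)!)
    refine le_of_eq_of_le ?_ (hscaled.trans_eq ?_)
    · rw [Nat.factorial_succ, pow_succ]
      push_cast
      field_simp
    · rw [mul_add, Finset.mul_sum]
      refine congrArg _ (Finset.sum_congr rfl fun l hl => ?_)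
      rw [← mul_assoc, pow_div_factorial_mul_choose α (Finset.mem_Icc.1 hl).2]
      ring
  have h0n : a 0 ≤ α ^ n / n ! * a n := by simpa using hb (Nat.zero_le n)
  calc n ! / α ^ n * a 0 ≤ n ! / α ^ n * (α ^ n / n ! * a n) :=
        mul_le_mul_of_nonneg_left h0n (by positivity)
    _ = a n := by field_simp

open Nat in
lemma sum_Icc_four_pow_div_factorial_le {α : ℝ} (hα : 0 ≤ α)
    (hroot : Real.exp α - 2 * α - α ^ 2 / 2 - α ^ 3 / 6 = 0) (n : ℕ) :
    ∑ l ∈ Finset.Icc 4 n, α ^ l / l ! ≤ α - 1 := by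
  have hsplit := Finset.sum_range_add_sum_Ico (fun l => α ^ l / (l ! : ℝ)) (by omega : 4 ≤ n + 4)
  have hhead : ∑ l ∈ Finset.range 4, α ^ l / (l ! : ℝ) = 1 + α + α ^ 2 / 2 + α ^ 3 / 6 := by
    norm_num [Finset.sum_range_succ, Nat.factorial]
  have htail : ∑ l ∈ Finset.Icc 4 n, α ^ l / (l ! : ℝ) ≤
      ∑ l ∈ Finset.Ico 4 (n + 4), α ^ l / (l ! : ℝ) :=
    Finset.sum_le_sum_of_subset_of_nonneg
      (fun l hl => by rw [Finset.mem_Icc] at hl; rw [Finset.mem_Ico]; omega)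
      (fun _ _ _ => by positivity)
  linarith [Real.sum_le_exp_of_nonneg hα (n + 4)]

theorem statement3_general (P : Set (List ℕ))
    (hlen : ∀ τ ∈ P, 4 ≤ τ.length)
    (hone : ∀ l : ℕ, 4 ≤ l → ∃! τ : List ℕ, τ ∈ P ∧ τ.length = l)
    (α : ℝ) (hα : 0 < α)
    (hroot : Real.exp α - 2 * α - α ^ 2 / 2 - α ^ 3 / 6 = 0) :
    ∀ n : ℕ, (n.factorial : ℝ) / α ^ n ≤ (avoidCount P n : ℝ) ∧ 1 ≤ avoidCount P n := by
  have hinj : Set.InjOn List.length P := fun τ₁ h₁ τ₂ h₂ h =>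
    (hone _ (hlen τ₁ h₁)).unique ⟨h₁, rfl⟩ ⟨h₂, h.symm⟩
  have hbound (n : ℕ) : (n.factorial : ℝ) / α ^ n ≤ avoidCount P n := by
    have h := factorial_div_pow_mul_le (a := fun n => (avoidCount P n : ℝ)) (k := 4)
      (by norm_num) (fun n => Nat.cast_nonneg _) hα
      (fun n => sum_Icc_four_pow_div_factorial_le hα.le hroot (n + 1))
      (fun n => by exact_mod_cast succ_mul_avoidCount_le (by norm_num) hlen hinj n) n
    rwa [avoidCount_zero fun h => by simpa using hlen [] h, Nat.cast_one, mul_one] at h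
  intro n
  exact ⟨hbound n, Nat.cast_pos.1 ((by positivity : (0 : ℝ) < n.factorial / α ^ n).trans_le
    (hbound n))⟩

/-- If `P` is an antichain containing exactly one pattern of each length `l ≥ 4`
and no patterns of other lengths, and `α > 0` satisfies
`e^α - 2α - α²/2 - α³/6 = 0`, then `a^P_n ≥ α^{-n} n!`; in particular `a^P_n ≥ 1`. -/
theorem statement3 (P : Set (List ℕ)) (hP : PatternAntichain P)
    (hlen : ∀ τ ∈ P, 4 ≤ τ.length)
    (hone : ∀ l : ℕ, 4 ≤ l → ∃! τ : List ℕ, τ ∈ P ∧ τ.length = l)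
    (α : ℝ) (hα : 0 < α)
    (hroot : Real.exp α - 2 * α - α ^ 2 / 2 - α ^ 3 / 6 = 0) :
    ∀ n : ℕ, (n.factorial : ℝ) / α ^ n ≤ (avoidCount P n : ℝ) ∧ 1 ≤ avoidCount P n :=
  statement3_general P hlen hone α hα hroot
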